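/- For r ≥ 2, the optimal success probability for minimum-error discrimination satisfies the upper bound P^opt ≤ min_j { q_j + ∑ᵢ ‖(qᵢρᵢ − q_jρ_j)⁺‖₁ }, which equals ½ + ½·min_j { ∑ᵢ ‖qᵢρᵢ − q_jρ_j‖₁ − q_j(r−2) }. -/

import Mathlib

open scoped ComplexOrder

/-- The operator absolute value `√(AᴴA)` of a matrix. -/
noncomputable def matAbs {n : ℕ} (A : Matrix (Fin n) (Fin n) ℂ) : Matrix (Fin n) (Fin n) ℂ :=
  (Matrix.posSemidef_conjTranspose_mul_self A).1.eigenvectorUnitary.1 *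
    Matrix.diagonal ((↑) ∘ (√·) ∘ (Matrix.posSemidef_conjTranspose_mul_self A).1.eigenvalues) *
    (star (Matrix.posSemidef_conjTranspose_mul_self A).1.eigenvectorUnitary : Matrix (Fin n) (Fin n) ℂ)

/-- The trace norm `‖A‖₁ = tr √(AᴴA)`. -/
noncomputable def traceNorm {n : ℕ} (A : Matrix (Fin n) (Fin n) ℂ) : ℝ :=
  ((matAbs A).trace).re

/-- The positive part `A⁺ = (|A| + A)/2` of a self-adjoint matrix `A`, so that
`A = A⁺ - A⁻` with `A⁺, A⁻ ≥ 0`. -/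
noncomputable def matPosPart {n : ℕ} (A : Matrix (Fin n) (Fin n) ℂ) : Matrix (Fin n) (Fin n) ℂ :=
  (2 : ℂ)⁻¹ • (matAbs A + A)

/-- A density operator: positive semidefinite with unit trace. -/
def IsDensity {n : ℕ} (ρ : Matrix (Fin n) (Fin n) ℂ) : Prop :=
  ρ.PosSemidef ∧ ρ.trace = 1

/-- A POVM with `r` outcomes: positive semidefinite effects summing to the identity. -/
def IsPOVM {n r : ℕ} (M : Fin r → Matrix (Fin n) (Fin n) ℂ) : Prop :=
  (∀ i, (M i).PosSemidef) ∧ ∑ i, M i = 1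

/-- Success probability `∑ i, q i * tr (ρ i * M i)` of a measurement. -/
noncomputable def successProb {n r : ℕ} (q : Fin r → ℝ)
    (ρ M : Fin r → Matrix (Fin n) (Fin n) ℂ) : ℝ :=
  ∑ i, q i * ((ρ i * M i).trace).re

/-- Optimal success probability under minimum-error discrimination. -/
noncomputable def optSuccess {n r : ℕ} (q : Fin r → ℝ)
    (ρ : Fin r → Matrix (Fin n) (Fin n) ℂ) : ℝ :=
  sSup {p | ∃ M, IsPOVM M ∧ p = successProb q ρ M}

/-!
Fix `j`. Since `∑ i, M i = 1` and `tr ρ_j = 1`, the success probability of a POVM `M` equals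
`q_j + ∑ i, tr ((q_i ρ_i - q_j ρ_j) M_i)`, and for self-adjoint `A` and `0 ≤ M ≤ 1` we have
`tr (A M) ≤ tr (A⁺ M) ≤ tr A⁺ = ‖A⁺‖₁`. The second form of the bound comes from
`‖A⁺‖₁ = (‖A‖₁ + tr A) / 2` and `tr (q_i ρ_i - q_j ρ_j) = q_i - q_j`.
-/

open Matrix
open scoped MatrixOrder

section
variable {m : Type*} [Fintype m] [DecidableEq m]

lemma trace_mul_nonneg {P Q : Matrix m m ℂ} (hP : 0 ≤ P) (hQ : 0 ≤ Q) : 0 ≤ (P * Q).trace := by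
  obtain ⟨a, rfl⟩ := CStarAlgebra.nonneg_iff_eq_star_mul_self.mp hP
  rw [mul_assoc, trace_mul_comm, star_eq_conjTranspose]
  exact (hQ.posSemidef.mul_mul_conjTranspose_same a).trace_nonneg

lemma trace_mul_le_trace_posPart {A M : Matrix m m ℂ} (hA : IsSelfAdjoint A) (hM₀ : 0 ≤ M)
    (hM₁ : M ≤ 1) : (A * M).trace ≤ (A⁺).trace :=
  calc (A * M).trace = (A⁺ * M).trace - (A⁻ * M).trace := by
        rw [← trace_sub, ← sub_mul, CFC.posPart_sub_negPart A hA]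
    _ ≤ (A⁺ * M).trace := sub_le_self _ (trace_mul_nonneg (CFC.negPart_nonneg A) hM₀)
    _ ≤ (A⁺ * M).trace + (A⁺ * (1 - M)).trace :=
        le_add_of_nonneg_right (trace_mul_nonneg (CFC.posPart_nonneg A) (sub_nonneg.mpr hM₁))
    _ = (A⁺).trace := by rw [← trace_add, ← mul_add, add_sub_cancel, mul_one]

end

section
variable {n : ℕ}

lemma matAbs_eq_cfcAbs (A : Matrix (Fin n) (Fin n) ℂ) : matAbs A = CFC.abs A := by
  have hA := posSemidef_conjTranspose_mul_self A
  rw [CFC.abs, star_eq_conjTranspose, CFC.sqrt_eq_real_sqrt _ hA.nonneg,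
    cfcₙ_eq_cfc (hf := Real.continuous_sqrt.continuousOn) (hf0 := Real.sqrt_zero),
    hA.isHermitian.cfc_eq, IsHermitian.cfc, Unitary.conjStarAlgAut_apply]
  rfl

lemma matPosPart_eq_posPart {A : Matrix (Fin n) (Fin n) ℂ} (hA : IsSelfAdjoint A) :
    matPosPart A = A⁺ := by
  rw [matPosPart, matAbs_eq_cfcAbs, CFC.abs_add_self A hA, two_smul, ← two_smul ℂ,
    inv_smul_smul₀ two_ne_zero]

lemma traceNorm_of_nonneg {A : Matrix (Fin n) (Fin n) ℂ} (hA : 0 ≤ A) :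
    traceNorm A = A.trace.re := by
  rw [traceNorm, matAbs_eq_cfcAbs, CFC.abs_of_nonneg A hA]

lemma traceNorm_matPosPart {A : Matrix (Fin n) (Fin n) ℂ} (hA : IsSelfAdjoint A) :
    traceNorm (matPosPart A) = (traceNorm A + A.trace.re) / 2 := by
  rw [traceNorm_of_nonneg (matPosPart_eq_posPart hA ▸ CFC.posPart_nonneg A), matPosPart,
    trace_smul, smul_eq_mul, ← div_eq_inv_mul, Complex.div_ofNat_re, trace_add, Complex.add_re,
    traceNorm]

lemma isSelfAdjoint_smul_sub_smul {A B : Matrix (Fin n) (Fin n) ℂ} (hA : IsSelfAdjoint A)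
    (hB : IsSelfAdjoint B) (a b : ℝ) : IsSelfAdjoint ((a : ℂ) • A - (b : ℂ) • B) :=
  ((show IsSelfAdjoint (a : ℂ) from Complex.conj_ofReal a).smul hA).sub
    ((show IsSelfAdjoint (b : ℂ) from Complex.conj_ofReal b).smul hB)

end

section
variable {n r : ℕ}

lemma IsPOVM.le_one {M : Fin r → Matrix (Fin n) (Fin n) ℂ} (hM : IsPOVM M) (i : Fin r) : M i ≤ 1 :=
  hM.2 ▸ Finset.single_le_sum (fun k _ => (hM.1 k).nonneg) (Finset.mem_univ i)

lemma isPOVM_single (i : Fin r) : IsPOVM (Pi.single i (1 : Matrix (Fin n) (Fin n) ℂ)) := by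
  refine ⟨fun k => ?_, by simp [Finset.sum_pi_single']⟩
  rcases eq_or_ne k i with rfl | hk
  · simpa using PosSemidef.one
  · simpa [hk] using PosSemidef.zero

lemma successProb_eq_add_sum {q : Fin r → ℝ} {ρ M : Fin r → Matrix (Fin n) (Fin n) ℂ}
    (hM : ∑ i, M i = 1) {j : Fin r} (hρj : (ρ j).trace = 1) :
    successProb q ρ M = q j + ∑ i, (((q i : ℂ) • ρ i - (q j : ℂ) • ρ j) * M i).trace.re := by
  have hj : ∑ i, q j * (ρ j * M i).trace.re = q j := by
    rw [← Finset.mul_sum, ← Complex.re_sum, ← trace_sum, ← Finset.mul_sum, hM, mul_one, hρj,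
      Complex.one_re, mul_one]
  calc successProb q ρ M
      = ∑ i, (q j * (ρ j * M i).trace.re
          + (((q i : ℂ) • ρ i - (q j : ℂ) • ρ j) * M i).trace.re) := by
        refine Finset.sum_congr rfl fun i _ => ?_
        rw [sub_mul, smul_mul_assoc, smul_mul_assoc, trace_sub, trace_smul, trace_smul]
        simp only [smul_eq_mul, Complex.sub_re, Complex.re_ofReal_mul]
        ring
    _ = _ := by rw [Finset.sum_add_distrib, hj]

lemma successProb_le {q : Fin r → ℝ} {ρ M : Fin r → Matrix (Fin n) (Fin n) ℂ}
    (hρ : ∀ i, IsDensity (ρ i)) (hM : IsPOVM M) (j : Fin r) :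
    successProb q ρ M ≤
      q j + ∑ i, traceNorm (matPosPart ((q i : ℂ) • ρ i - (q j : ℂ) • ρ j)) := by
  rw [successProb_eq_add_sum hM.2 (hρ j).2]
  gcongr with i
  have hA := isSelfAdjoint_smul_sub_smul (hρ i).1.isHermitian (hρ j).1.isHermitian (q i) (q j)
  rw [matPosPart_eq_posPart hA, traceNorm_of_nonneg (CFC.posPart_nonneg _)]
  exact Complex.re_le_re (trace_mul_le_trace_posPart hA (hM.1 i).nonneg (hM.le_one i))

end

lemma add_sum_traceNorm_matPosPart {n r : ℕ} {q : Fin r → ℝ}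
    {ρ : Fin r → Matrix (Fin n) (Fin n) ℂ} (hρ : ∀ i, IsDensity (ρ i)) (hq1 : ∑ i, q i = 1)
    (j : Fin r) :
    q j + ∑ i, traceNorm (matPosPart ((q i : ℂ) • ρ i - (q j : ℂ) • ρ j))
      = 1 / 2 + (1 / 2) *
          ((∑ i, traceNorm ((q i : ℂ) • ρ i - (q j : ℂ) • ρ j)) - q j * ((r : ℝ) - 2)) := by
  have hpos : ∀ i, traceNorm (matPosPart ((q i : ℂ) • ρ i - (q j : ℂ) • ρ j))
      = (traceNorm ((q i : ℂ) • ρ i - (q j : ℂ) • ρ j) + (q i - q j)) / 2 := fun i => by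
    rw [traceNorm_matPosPart (isSelfAdjoint_smul_sub_smul (hρ i).1.isHermitian
      (hρ j).1.isHermitian (q i) (q j)), trace_sub, trace_smul, trace_smul, (hρ i).2, (hρ j).2]
    simp
  simp only [hpos, ← Finset.sum_div, Finset.sum_add_distrib, Finset.sum_sub_distrib, hq1,
    Finset.sum_const, Finset.card_univ, Fintype.card_fin, nsmul_eq_mul]
  ring

theorem stmt8 {n r : ℕ} (hr : 2 ≤ r) (ρ : Fin r → Matrix (Fin n) (Fin n) ℂ)
    (q : Fin r → ℝ) (hρ : ∀ i, IsDensity (ρ i)) (hq1 : ∑ i, q i = 1) :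
    optSuccess q ρ ≤
      Finset.univ.inf' (Finset.univ_nonempty_iff.mpr ⟨⟨0, by omega⟩⟩)
        (fun j => q j + ∑ i, traceNorm (matPosPart ((q i : ℂ) • ρ i - (q j : ℂ) • ρ j))) ∧
    Finset.univ.inf' (Finset.univ_nonempty_iff.mpr ⟨⟨0, by omega⟩⟩)
        (fun j => q j + ∑ i, traceNorm (matPosPart ((q i : ℂ) • ρ i - (q j : ℂ) • ρ j)))
      = 1 / 2 + (1 / 2) *
          Finset.univ.inf' (Finset.univ_nonempty_iff.mpr ⟨⟨0, by omega⟩⟩)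
            (fun j => (∑ i, traceNorm ((q i : ℂ) • ρ i - (q j : ℂ) • ρ j)) - q j * ((r : ℝ) - 2)) := by
  refine ⟨csSup_le ⟨_, _, isPOVM_single ⟨0, by omega⟩, rfl⟩ ?_, ?_⟩
  · rintro p ⟨M, hM, rfl⟩
    exact Finset.le_inf' _ _ fun j _ => successProb_le hρ hM j
  · simp only [add_sum_traceNorm_matPosPart hρ hq1]
    have hmono : Monotone fun x : ℝ => 1 / 2 + 1 / 2 * x := fun _ _ h => by linarith
    exact (Finset.apply_inf'_eq_inf'_comp _ (fun x : ℝ => 1 / 2 + 1 / 2 * x)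
      fun _ _ => hmono.map_min).symm
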